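/- Let N > 1 be an integer and 0 ≤ a ≤ 6. If c_N(7n + a) ≡ 0 (mod 7) for all integers n ≥ 0, then N ≡ 0 (mod 7) and a = 5. -/

import Mathlib

/-!
Modulo 7 the generating function `γ = ∑ c_N(n) qⁿ` is inverse to `Q = (q;q)_∞ (q^N;q^N)_∞`
(truncated modulo a power of `q`), so by Frobenius `Q⁶ = γ Q⁷ = γ Q(q⁷)`. If `c_N(7n + a) ≡ 0`,
every coefficient of `Q⁶` in the residue class `a` vanishes. For `N ≤ 6` a finite computation
exhibits a nonzero such coefficient. For `N ≥ 7` write `Q⁶ = E(q) E(q^N)` with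
`E = (q;q)⁶ ≡ 1 + q + 2q² + 3q³ + 5q⁴ + 0q⁵ + 4q⁶ + ⋯`: the coefficient of `q^a` forces `a = 5`,
and for `N + b ≡ 5` with `b ≤ 6` the coefficient of `q^(N+b)` is `E_(N+b) + E_b E_1 = E_b`,
because `E_n ≡ 0` whenever `n ≡ 5`. The latter follows from Jacobi's identity
`(q;q)³ = ∑ (-1)ʲ (2j+1) q^(j(j+1)/2)`: if `j(j+1)/2 + l(l+1)/2 ≡ 5` then
`(2j+1)² + (2l+1)² ≡ 0 (mod 7)`, which forces `7 ∣ 2j+1`. So `b = 5`, i.e. `7 ∣ N`.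

Jacobi's identity is proved in the finite form
`∑_{|k| ≤ m} (-1)ᵏ k q^(k(k+1)/2) [2m, m+k]_q = (q;q)_m (q;q)_(m-1)`, where both sides satisfy the
same recurrence in `m`, together with `[2m, m+k]_q (q;q)_m ≡ 1 (mod q^(m-|k|+1))`.
-/

open Polynomial Finset

section Congruence

variable {A : Type*} [CommRing A]

theorem smodEq_span_singleton_iff {a x y : A} : x ≡ y [SMOD Ideal.span {a}] ↔ a ∣ x - y := by
  rw [SModEq.sub_mem, Ideal.mem_span_singleton]

theorem SModEq.of_pow_le {x f g : A} {m n : ℕ} (h : f ≡ g [SMOD Ideal.span {x ^ n}])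
    (hmn : m ≤ n) : f ≡ g [SMOD Ideal.span {x ^ m}] :=
  h.mono (Ideal.span_singleton_le_span_singleton.mpr (pow_dvd_pow x hmn))

theorem SModEq.pow_mul_left {x f g : A} {n : ℕ} (h : f ≡ g [SMOD Ideal.span {x ^ n}]) (s : ℕ) :
    x ^ s * f ≡ x ^ s * g [SMOD Ideal.span {x ^ (s + n)}] := by
  rw [smodEq_span_singleton_iff] at h ⊢
  rw [← mul_sub, pow_add]
  exact mul_dvd_mul_left _ h

theorem one_sub_pow_smodEq_one {x : A} {m n : ℕ} (h : n ≤ m) :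
    1 - x ^ m ≡ 1 [SMOD Ideal.span {x ^ n}] := by
  rw [smodEq_span_singleton_iff, sub_sub_cancel_left, dvd_neg]
  exact pow_dvd_pow x h

theorem SModEq.of_mul_right_of_isCoprime {a f g h : A} (hc : IsCoprime a h)
    (H : f * h ≡ g * h [SMOD Ideal.span {a}]) : f ≡ g [SMOD Ideal.span {a}] := by
  rw [smodEq_span_singleton_iff, ← sub_mul] at H
  exact smodEq_span_singleton_iff.mpr (hc.dvd_of_dvd_mul_right H)

theorem prod_Icc_smodEq_prod_Icc {x : A} {f : ℕ → A}
    (hf : ∀ m, f m ≡ 1 [SMOD Ideal.span {x ^ m}]) {a b : ℕ} (hab : a ≤ b) :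
    ∏ m ∈ Icc 1 b, f m ≡ ∏ m ∈ Icc 1 a, f m [SMOD Ideal.span {x ^ (a + 1)}] := by
  induction b, hab using Nat.le_induction with
  | base => rfl
  | succ b hab ih =>
    rw [prod_Icc_succ_top (by omega)]
    simpa using ih.mul ((hf (b + 1)).of_pow_le (by omega : a + 1 ≤ b + 1))

end Congruence

theorem Polynomial.smodEq_X_pow_iff {R : Type*} [CommRing R] {f g : R[X]} {n : ℕ} :
    f ≡ g [SMOD Ideal.span {X ^ n}] ↔ ∀ i < n, f.coeff i = g.coeff i := by
  simp only [smodEq_span_singleton_iff, X_pow_dvd_iff, coeff_sub, sub_eq_zero]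

theorem PowerSeries.smodEq_X_pow_iff {R : Type*} [CommRing R] {f g : PowerSeries R} {n : ℕ} :
    f ≡ g [SMOD Ideal.span {X ^ n}] ↔ ∀ i < n, coeff i f = coeff i g := by
  simp only [smodEq_span_singleton_iff, X_pow_dvd_iff, map_sub, sub_eq_zero]

theorem Polynomial.isCoprime_X_pow_of_coeff_zero_eq_one {R : Type*} [CommRing R] {f : R[X]}
    (hf : f.coeff 0 = 1) (n : ℕ) : IsCoprime (X ^ n) f := by
  obtain ⟨g, hg⟩ : X ∣ f - 1 := X_dvd_iff.mpr (by simp [hf])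
  exact IsCoprime.pow_left ⟨-g, 1, by linear_combination hg⟩

section QPochhammer

variable (R : Type*) [CommRing R]

noncomputable def qPochhammer (K : ℕ) : R[X] := ∏ m ∈ Icc 1 K, (1 - X ^ m)

@[simp]
theorem qPochhammer_zero : qPochhammer R 0 = 1 := by simp [qPochhammer]

theorem qPochhammer_succ (K : ℕ) :
    qPochhammer R (K + 1) = qPochhammer R K * (1 - X ^ (K + 1)) :=
  prod_Icc_succ_top (by omega) _

theorem coeff_zero_qPochhammer (K : ℕ) : (qPochhammer R K).coeff 0 = 1 := by
  induction K with
  | zero => simp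
  | succ K ih => simp [qPochhammer_succ, mul_coeff_zero, ih]

theorem coeff_zero_qPochhammer_pow (K n : ℕ) : (qPochhammer R K ^ n).coeff 0 = 1 := by
  rw [coeff_zero_eq_eval_zero, eval_pow, ← coeff_zero_eq_eval_zero, coeff_zero_qPochhammer,
    one_pow]

variable {R}

theorem qPochhammer_smodEq {a b : ℕ} (hab : a ≤ b) :
    qPochhammer R b ≡ qPochhammer R a [SMOD Ideal.span {X ^ (a + 1)}] :=
  prod_Icc_smodEq_prod_Icc (fun _ ↦ one_sub_pow_smodEq_one le_rfl) hab

end QPochhammer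

def triangle (k : ℤ) : ℕ := (k * (k + 1) / 2).toNat

theorem two_mul_natCast_triangle (k : ℤ) : 2 * (triangle k : ℤ) = k * (k + 1) := by
  have hpos : 0 ≤ k * (k + 1) := by rcases le_or_gt 0 k with h | h <;> nlinarith
  obtain ⟨m, hm⟩ := Int.even_mul_succ_self k
  unfold triangle
  omega

theorem natCast_triangle_add_one (k : ℤ) : (triangle (k + 1) : ℤ) = triangle k + (k + 1) := by
  linarith [two_mul_natCast_triangle k, two_mul_natCast_triangle (k + 1)]

theorem triangle_neg_sub_one (k : ℤ) : triangle (-k - 1) = triangle k := by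
  unfold triangle
  ring_nf

theorem natAbs_le_triangle_add_one (k : ℤ) : k.natAbs ≤ triangle k + 1 := by
  have h := two_mul_natCast_triangle k
  zify
  rcases abs_cases k with ⟨hk, _⟩ | ⟨hk, _⟩ <;> rw [hk] <;> nlinarith

theorem triangle_natCast (j : ℕ) : triangle j = j * (j + 1) / 2 := by
  have h := two_mul_natCast_triangle j
  zify
  omega

theorem le_triangle_natCast (m : ℕ) : m ≤ triangle m := by
  have h := two_mul_natCast_triangle m
  zify
  rcases Nat.eq_zero_or_pos m with rfl | hm
  · simp
  · nlinarith

section GaussBinom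

variable (R : Type*) [CommRing R]

/-- The Gaussian binomial `[n, j]_X`; the index `j` ranges over `ℤ` and the value is `0` outside
`[0, n]`, so that the `q`-Pascal recurrences need no boundary cases. -/
noncomputable def gaussBinom : ℕ → ℤ → R[X]
  | 0, j => if j = 0 then 1 else 0
  | n + 1, j => gaussBinom n (j - 1) + X ^ j.toNat * gaussBinom n j

theorem gaussBinom_succ (n : ℕ) (j : ℤ) :
    gaussBinom R (n + 1) j = gaussBinom R n (j - 1) + X ^ j.toNat * gaussBinom R n j := rfl

theorem gaussBinom_eq_zero {n : ℕ} {j : ℤ} (h : j < 0 ∨ n < j) : gaussBinom R n j = 0 := by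
  induction n generalizing j with
  | zero => simp only [gaussBinom, ite_eq_right_iff]; omega
  | succ n ih => rw [gaussBinom_succ, ih (by omega), ih (by omega), mul_zero, add_zero]

theorem gaussBinom_zero_right (n : ℕ) : gaussBinom R n 0 = 1 := by
  induction n with
  | zero => simp [gaussBinom]
  | succ n ih => simp [gaussBinom_succ, ih, gaussBinom_eq_zero]

theorem gaussBinom_self (n : ℕ) : gaussBinom R n n = 1 := by
  induction n with
  | zero => simp [gaussBinom]
  | succ n ih => simp [gaussBinom_succ, ih, gaussBinom_eq_zero]

variable {R}

theorem X_pow_mul_gaussBinom_congr {n : ℕ} {j : ℤ} {e e' : ℕ} (h : 0 ≤ j → j ≤ n → e = e') :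
    X ^ e * gaussBinom R n j = X ^ e' * gaussBinom R n j := by
  by_cases hj : 0 ≤ j ∧ j ≤ n
  · rw [h hj.1 hj.2]
  · rw [gaussBinom_eq_zero R (by omega), mul_zero, mul_zero]

theorem gaussBinom_succ' (n : ℕ) (j : ℤ) :
    gaussBinom R (n + 1) j =
      X ^ (n + 1 - j).toNat * gaussBinom R n (j - 1) + gaussBinom R n j := by
  induction n generalizing j with
  | zero =>
    rcases (by omega : j = 0 ∨ j = 1 ∨ (j ≠ 0 ∧ j ≠ 1)) with rfl | rfl | ⟨h0, h1⟩ <;>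
      simp [gaussBinom, sub_eq_zero, *]
  | succ n ih =>
    have hcongr : X ^ j.toNat * (X ^ (n + 1 - j).toNat * gaussBinom R n (j - 1)) =
        X ^ (n + 1 + 1 - j).toNat * (X ^ (j - 1).toNat * gaussBinom R n (j - 1)) := by
      rw [← mul_assoc, ← mul_assoc, ← pow_add, ← pow_add]
      exact X_pow_mul_gaussBinom_congr (by omega)
    conv_lhs => rw [gaussBinom_succ, ih, ih]
    rw [gaussBinom_succ R n (j - 1), gaussBinom_succ R n j]
    push_cast
    rw [show (n : ℤ) + 1 - (j - 1) = n + 1 + 1 - j by ring]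
    linear_combination hcongr

theorem gaussBinom_add_two (n : ℕ) (j : ℤ) :
    gaussBinom R (n + 2) j = X ^ (n + 2 - j).toNat * gaussBinom R n (j - 2) +
      (1 + X ^ (n + 1)) * gaussBinom R n (j - 1) + X ^ j.toNat * gaussBinom R n j := by
  have hcongr : X ^ j.toNat * (X ^ (n + 1 - j).toNat * gaussBinom R n (j - 1)) =
      X ^ (n + 1) * gaussBinom R n (j - 1) := by
    rw [← mul_assoc, ← pow_add]
    exact X_pow_mul_gaussBinom_congr (by omega)
  rw [gaussBinom_succ, gaussBinom_succ', gaussBinom_succ', sub_sub, one_add_one_eq_two]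
  rw [show (n : ℤ) + 1 - (j - 1) = n + 2 - j by ring]
  linear_combination hcongr

theorem gaussBinom_mul_qPochhammer (j l : ℕ) :
    gaussBinom R (j + l) j * qPochhammer R j * qPochhammer R l = qPochhammer R (j + l) := by
  induction j generalizing l with
  | zero => simp [gaussBinom_zero_right]
  | succ j ihj =>
    induction l with
    | zero => rw [add_zero, gaussBinom_self, qPochhammer_zero, one_mul, mul_one]
    | succ l ihl =>
      have h₁ := ihj (l + 1)
      rw [show j + 1 + l = j + (l + 1) by ring] at ihl
      rw [show j + 1 + (l + 1) = j + (l + 1) + 1 by ring, gaussBinom_succ,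
        qPochhammer_succ R (j + (l + 1)), qPochhammer_succ R l] at *
      push_cast at ihl ⊢
      rw [add_sub_cancel_right, show ((j : ℤ) + 1).toNat = j + 1 by omega]
      linear_combination gaussBinom R (j + (l + 1)) j * qPochhammer R l * (1 - X ^ (l + 1)) *
        qPochhammer_succ R j + (1 - X ^ (j + 1)) * h₁ + X ^ (j + 1) * (1 - X ^ (l + 1)) * ihl

theorem gaussBinom_mul_qPochhammer_smodEq_one {d j l m : ℕ} (hj : d ≤ j) (hl : d ≤ l)
    (hm : d ≤ m) :
    gaussBinom R (j + l) j * qPochhammer R m ≡ 1 [SMOD Ideal.span {X ^ (d + 1)}] := by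
  have hcop : IsCoprime (X ^ (d + 1)) (qPochhammer R j * qPochhammer R l) :=
    isCoprime_X_pow_of_coeff_zero_eq_one (by simp [mul_coeff_zero, coeff_zero_qPochhammer]) _
  refine SModEq.of_mul_right_of_isCoprime hcop ?_
  calc gaussBinom R (j + l) j * qPochhammer R m * (qPochhammer R j * qPochhammer R l)
      = qPochhammer R (j + l) * qPochhammer R m := by rw [← gaussBinom_mul_qPochhammer]; ring
    _ ≡ qPochhammer R d * qPochhammer R d [SMOD Ideal.span {X ^ (d + 1)}] :=
      (qPochhammer_smodEq (by omega)).mul (qPochhammer_smodEq hm)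
    _ ≡ 1 * (qPochhammer R j * qPochhammer R l) [SMOD Ideal.span {X ^ (d + 1)}] := by
      rw [one_mul]
      exact ((qPochhammer_smodEq hj).mul (qPochhammer_smodEq hl)).symm

end GaussBinom

theorem Finset.sum_Icc_comp_add_int {M : Type*} [AddCommMonoid M] (f : ℤ → M) (a b c : ℤ) :
    ∑ k ∈ Icc a b, f (k + c) = ∑ k ∈ Icc (a + c) (b + c), f k := by
  rw [← map_add_right_Icc, sum_map]
  rfl

theorem Finset.sum_Icc_neg_natCast {M : Type*} [AddCommMonoid M] (f : ℤ → M) (m : ℕ) :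
    ∑ k ∈ Icc (-(m : ℤ)) m, f k = f m + ∑ j ∈ range m, (f j + f (-j - 1)) := by
  induction m with
  | zero => simp
  | succ m ih =>
    have hIcc : Icc (-((m + 1 : ℕ) : ℤ)) ((m + 1 : ℕ) : ℤ) =
        insert ((m : ℤ) + 1) (insert (-(m : ℤ) - 1) (Icc (-(m : ℤ)) m)) := by
      ext; simp only [mem_Icc, mem_insert]; omega
    rw [hIcc, sum_insert (by simp only [mem_insert, mem_Icc]; omega), sum_insert (by simp), ih,
      sum_range_succ]
    push_cast
    abel

section ThetaSum

variable (R : Type*) [CommRing R]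

noncomputable def thetaTerm (m : ℕ) (k : ℤ) : R[X] := X ^ triangle k * gaussBinom R (2 * m) (m + k)

theorem thetaTerm_eq_zero {m : ℕ} {k : ℤ} (hk : (m : ℤ) < |k|) : thetaTerm R m k = 0 := by
  rw [thetaTerm, gaussBinom_eq_zero R (by push_cast; cases abs_cases k <;> omega), mul_zero]

theorem thetaTerm_succ (m : ℕ) (k : ℤ) :
    thetaTerm R (m + 1) k = (1 + X ^ (2 * m + 1)) * thetaTerm R m k +
      X ^ (m + 1) * thetaTerm R m (k - 1) + X ^ m * thetaTerm R m (k + 1) := by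
  have h₁ := natCast_triangle_add_one (k - 1)
  have h₂ := natCast_triangle_add_one k
  have hlow : X ^ triangle k * X ^ (2 * m + 2 - (m + 1 + k)).toNat *
      gaussBinom R (2 * m) (m + 1 + k - 2) = X ^ (m + 1) * thetaTerm R m (k - 1) := by
    rw [thetaTerm, ← mul_assoc, ← pow_add, ← pow_add,
      show (m : ℤ) + 1 + k - 2 = m + (k - 1) by ring]
    exact X_pow_mul_gaussBinom_congr fun _ _ ↦ by rw [sub_add_cancel] at h₁; omega
  have hhigh : X ^ triangle k * X ^ (m + 1 + k).toNat * gaussBinom R (2 * m) (m + 1 + k)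
      = X ^ m * thetaTerm R m (k + 1) := by
    rw [thetaTerm, ← mul_assoc, ← pow_add, ← pow_add, show (m : ℤ) + 1 + k = m + (k + 1) by ring]
    exact X_pow_mul_gaussBinom_congr fun _ _ ↦ by omega
  rw [thetaTerm, thetaTerm, show 2 * (m + 1) = 2 * m + 2 by ring, gaussBinom_add_two]
  push_cast
  rw [show (m : ℤ) + 1 + k - 1 = m + k by ring]
  linear_combination hlow + hhigh

noncomputable def thetaSum (m : ℕ) : (ℤ → R[X]) →ₗ[R[X]] R[X] where
  toFun w := ∑ k ∈ Icc (-(m : ℤ)) m, w k * thetaTerm R m k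
  map_add' w w' := by simp only [Pi.add_apply, add_mul, sum_add_distrib]
  map_smul' c w := by simp only [Pi.smul_apply, smul_eq_mul, mul_assoc, mul_sum, RingHom.id_apply]

theorem thetaSum_apply (m : ℕ) (w : ℤ → R[X]) :
    thetaSum R m w = ∑ k ∈ Icc (-(m : ℤ)) m, w k * thetaTerm R m k := rfl

theorem thetaSum_zero (w : ℤ → R[X]) : thetaSum R 0 w = w 0 := by
  simp [thetaSum_apply, thetaTerm, triangle, gaussBinom_zero_right]

variable {R}

theorem sum_Icc_mul_thetaTerm {m : ℕ} {a b : ℤ} (ha : a ≤ -m) (hb : m ≤ b) (w : ℤ → R[X]) :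
    ∑ k ∈ Icc a b, w k * thetaTerm R m k = thetaSum R m w := by
  refine (sum_subset (Icc_subset_Icc ha hb) fun k _ hk ↦ ?_).symm
  rw [mem_Icc] at hk
  rw [thetaTerm_eq_zero R (by cases abs_cases k <;> omega), mul_zero]

theorem sum_Icc_mul_thetaTerm_add {m : ℕ} {c : ℤ} (hc : |c| ≤ 1) (w : ℤ → R[X]) :
    ∑ k ∈ Icc (-(m : ℤ) - 1) (m + 1), w k * thetaTerm R m (k + c) =
      thetaSum R m fun k ↦ w (k - c) := by
  rw [← sum_Icc_mul_thetaTerm (a := -m - 1 + c) (b := m + 1 + c) (by cases abs_cases c <;> omega)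
    (by cases abs_cases c <;> omega), ← sum_Icc_comp_add_int]
  simp only [add_sub_cancel_right]

theorem thetaSum_succ (m : ℕ) (w : ℤ → R[X]) :
    thetaSum R (m + 1) w = (1 + X ^ (2 * m + 1)) * thetaSum R m w +
      X ^ (m + 1) * thetaSum R m (fun k ↦ w (k + 1)) +
      X ^ m * thetaSum R m (fun k ↦ w (k - 1)) := by
  have hIcc : Icc (-((m + 1 : ℕ) : ℤ)) ((m + 1 : ℕ) : ℤ) = Icc (-(m : ℤ) - 1) (m + 1) := by
    push_cast; ring_nf
  have hlow := sum_Icc_mul_thetaTerm_add (m := m) (c := -1) (by simp) w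
  have hhigh := sum_Icc_mul_thetaTerm_add (m := m) (c := 1) (by simp) w
  simp only [sub_neg_eq_add] at hlow
  rw [thetaSum_apply, hIcc, ← sum_Icc_mul_thetaTerm (a := -(m : ℤ) - 1) (b := m + 1) (by omega)
    (by omega), ← hlow, ← hhigh, mul_sum, mul_sum, mul_sum, ← sum_add_distrib, ← sum_add_distrib]
  refine sum_congr rfl fun k _ ↦ ?_
  rw [thetaTerm_succ, sub_eq_add_neg]
  ring

theorem thetaSum_negOnePow_succ (m : ℕ) :
    thetaSum R (m + 1) (fun k ↦ (k.negOnePow : R[X])) = 0 := by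
  have hsucc : (fun k : ℤ ↦ ((k + 1).negOnePow : R[X])) = -fun k ↦ (k.negOnePow : R[X]) := by
    ext1 k; simp [Int.negOnePow_succ]
  have hpred : (fun k : ℤ ↦ ((k - 1).negOnePow : R[X])) = -fun k ↦ (k.negOnePow : R[X]) := by
    ext1 k; simp [Int.negOnePow_sub]
  induction m with
  | zero => rw [thetaSum_succ, hsucc, hpred, map_neg]; ring
  | succ m ih => rw [thetaSum_succ, hsucc, hpred, map_neg, ih]; ring

theorem thetaSum_negOnePow_mul_succ (m : ℕ) :
    thetaSum R (m + 1) (fun k ↦ (k.negOnePow : R[X]) * k) =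
      qPochhammer R (m + 1) * qPochhammer R m := by
  set ε : ℤ → R[X] := fun k ↦ (k.negOnePow : R[X])
  have hsucc : (fun k : ℤ ↦ ((k + 1).negOnePow : R[X]) * ↑(k + 1)) =
      -(fun k ↦ ε k * k) - ε := by
    ext1 k
    simp only [ε, Pi.sub_apply, Pi.neg_apply, Int.negOnePow_succ, Units.val_neg, Int.cast_neg,
      Int.cast_add, Int.cast_one]
    ring
  have hpred : (fun k : ℤ ↦ ((k - 1).negOnePow : R[X]) * ↑(k - 1)) =
      -(fun k ↦ ε k * k) + ε := by
    ext1 k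
    simp only [ε, Pi.add_apply, Pi.neg_apply, Int.negOnePow_sub, Int.negOnePow_one, mul_neg,
      mul_one, Units.val_neg, Int.cast_neg, Int.cast_sub, Int.cast_one]
    ring
  have hrec : ∀ m : ℕ, thetaSum R (m + 1) (fun k ↦ ε k * k) =
      (1 - X ^ m) * (1 - X ^ (m + 1)) * thetaSum R m (fun k ↦ ε k * k) +
        (X ^ m - X ^ (m + 1)) * thetaSum R m ε := fun m ↦ by
    rw [thetaSum_succ, hsucc, hpred, map_sub, map_add, map_neg]; ring
  induction m with
  | zero => rw [hrec, thetaSum_zero, thetaSum_zero]; simp [ε, qPochhammer_succ]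
  | succ m ih =>
    rw [hrec, ih, thetaSum_negOnePow_succ, qPochhammer_succ R (m + 1), qPochhammer_succ R m]
    ring

theorem thetaTerm_mul_qPochhammer_smodEq {m : ℕ} {k : ℤ} (hk : |k| ≤ m) :
    thetaTerm R m k * qPochhammer R m ≡ X ^ triangle k [SMOD Ideal.span {X ^ m}] := by
  obtain ⟨j, hj⟩ : ∃ j : ℕ, (j : ℤ) = m + k := ⟨(m + k).toNat, by cases abs_cases k <;> omega⟩
  obtain ⟨l, hl⟩ : ∃ l : ℕ, (l : ℤ) = m - k := ⟨(m - k).toNat, by cases abs_cases k <;> omega⟩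
  have hd := natAbs_le_triangle_add_one k
  have key := gaussBinom_mul_qPochhammer_smodEq_one (R := R) (d := m - k.natAbs) (j := j) (l := l)
    (m := m) (by omega) (by omega) (by omega)
  rw [show j + l = 2 * m by omega, hj] at key
  simpa [thetaTerm, mul_assoc] using (key.pow_mul_left (triangle k)).of_pow_le (by omega)

theorem negOnePow_mul_X_pow_triangle_add_neg_sub_one (j : ℕ) :
    ((j : ℤ).negOnePow : R[X]) * ((j : ℤ) : R[X]) * X ^ triangle j +
      ((-(j : ℤ) - 1).negOnePow : R[X]) * ((-(j : ℤ) - 1 : ℤ) : R[X]) *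
        X ^ triangle (-(j : ℤ) - 1) =
      ((-1) ^ j * (2 * j + 1) : R) • X ^ (j * (j + 1) / 2) := by
  simp only [triangle_neg_sub_one, triangle_natCast, Int.negOnePow_sub, Int.negOnePow_neg,
    Int.negOnePow_one, Units.val_mul, Units.val_neg, Units.val_one, Int.cast_mul,
    Int.cast_negOnePow_natCast, smul_eq_C_mul]
  push_cast
  simp only [map_add, map_mul, map_pow, map_neg, map_one, map_natCast, map_ofNat]
  ring

theorem sum_Icc_negOnePow_mul_X_pow_triangle_smodEq (K : ℕ) :
    ∑ k ∈ Icc (-((K + 1 : ℕ) : ℤ)) (K + 1 : ℕ), (k.negOnePow : R[X]) * (k : R[X]) * X ^ triangle k ≡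
      qPochhammer R K ^ 3 [SMOD Ideal.span {X ^ (K + 1)}] := by
  have hq := qPochhammer_smodEq (R := R) (Nat.le_succ K)
  calc ∑ k ∈ Icc (-((K + 1 : ℕ) : ℤ)) (K + 1 : ℕ),
          (k.negOnePow : R[X]) * (k : R[X]) * X ^ triangle k
      ≡ ∑ k ∈ Icc (-((K + 1 : ℕ) : ℤ)) (K + 1 : ℕ),
          (k.negOnePow : R[X]) * (k : R[X]) * (thetaTerm R (K + 1) k * qPochhammer R (K + 1))
        [SMOD Ideal.span {X ^ (K + 1)}] :=
      SModEq.sum fun k hk ↦ (SModEq.refl ((k.negOnePow : R[X]) * (k : R[X]))).mul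
        (thetaTerm_mul_qPochhammer_smodEq (abs_le.mpr (mem_Icc.mp hk))).symm
    _ = qPochhammer R (K + 1) * qPochhammer R K * qPochhammer R (K + 1) := by
      simp only [← mul_assoc, ← sum_mul, ← thetaSum_apply, thetaSum_negOnePow_mul_succ]
    _ ≡ qPochhammer R K * qPochhammer R K * qPochhammer R K [SMOD Ideal.span {X ^ (K + 1)}] :=
      (hq.mul (SModEq.refl (qPochhammer R K))).mul hq
    _ = qPochhammer R K ^ 3 := by ring

theorem qPochhammer_pow_three_smodEq (K : ℕ) :
    qPochhammer R K ^ 3 ≡ ∑ j ∈ range (K + 1), ((-1) ^ j * (2 * j + 1) : R) • X ^ (j * (j + 1) / 2)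
      [SMOD Ideal.span {X ^ (K + 1)}] := by
  have hlast : (((K + 1 : ℕ) : ℤ).negOnePow : R[X]) * (((K + 1 : ℕ) : ℤ) : R[X]) *
      X ^ triangle (K + 1 : ℕ) ≡ 0 [SMOD Ideal.span {X ^ (K + 1)}] := by
    rw [smodEq_span_singleton_iff, sub_zero]
    exact (pow_dvd_pow X (le_triangle_natCast (K + 1))).mul_left _
  calc qPochhammer R K ^ 3
      ≡ ∑ k ∈ Icc (-((K + 1 : ℕ) : ℤ)) (K + 1 : ℕ),
          (k.negOnePow : R[X]) * (k : R[X]) * X ^ triangle k [SMOD Ideal.span {X ^ (K + 1)}] :=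
      (sum_Icc_negOnePow_mul_X_pow_triangle_smodEq K).symm
    _ = ∑ j ∈ range (K + 1), ((-1) ^ j * (2 * j + 1) : R) • X ^ (j * (j + 1) / 2) +
          (((K + 1 : ℕ) : ℤ).negOnePow : R[X]) * (((K + 1 : ℕ) : ℤ) : R[X]) *
            X ^ triangle (K + 1 : ℕ) := by
      rw [sum_Icc_neg_natCast, add_comm]
      exact congrArg₂ _ (sum_congr rfl fun j _ ↦ negOnePow_mul_X_pow_triangle_add_neg_sub_one j) rfl
    _ ≡ ∑ j ∈ range (K + 1), ((-1) ^ j * (2 * j + 1) : R) • X ^ (j * (j + 1) / 2) + 0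
        [SMOD Ideal.span {X ^ (K + 1)}] := (SModEq.refl _).add hlast
    _ = _ := add_zero _

end ThetaSum

theorem ZMod.eq_zero_of_sq_add_sq_eq_zero_seven : ∀ x y : ZMod 7, x ^ 2 + y ^ 2 = 0 → x = 0 := by
  decide

theorem two_mul_add_one_eq_zero_of_triangle_add_triangle {i j : ℕ}
    (h : (i * (i + 1) / 2 + j * (j + 1) / 2) % 7 = 5) : (2 * i + 1 : ZMod 7) = 0 := by
  have hi := Nat.div_mul_cancel (Nat.even_mul_succ_self i).two_dvd
  have hj := Nat.div_mul_cancel (Nat.even_mul_succ_self j).two_dvd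
  have hs := ZMod.natCast_mod (i * (i + 1) / 2 + j * (j + 1) / 2) 7
  rw [h] at hs
  apply_fun ((↑) : ℕ → ZMod 7) at hi hj
  push_cast at hi hj hs
  refine ZMod.eq_zero_of_sq_add_sq_eq_zero_seven _ (2 * j + 1) ?_
  linear_combination (norm := ring_nf) -4 * hi - 4 * hj - 8 * hs
  reduce_mod_char

theorem coeff_qPochhammer_pow_six_eq_zero {K k : ℕ} (hk : k ≤ K) (h5 : k % 7 = 5) :
    (qPochhammer (ZMod 7) K ^ 6).coeff k = 0 := by
  have h3 := qPochhammer_pow_three_smodEq (R := ZMod 7) K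
  have h6 := h3.mul h3
  rw [← pow_add, smodEq_X_pow_iff] at h6
  rw [h6 k (by omega), sum_mul_sum, finsetSum_coeff]
  refine sum_eq_zero fun i _ ↦ ?_
  rw [finsetSum_coeff]
  refine sum_eq_zero fun j _ ↦ ?_
  rw [smul_mul_smul_comm, ← pow_add, coeff_smul, coeff_X_pow, smul_eq_mul]
  split_ifs with h
  · rw [two_mul_add_one_eq_zero_of_triangle_add_triangle (h ▸ h5)]
    ring
  · rw [mul_zero]

section CoeffLists

variable {R : Type*} [CommRing R]

/-- Lists serve as computable truncations of polynomials below degree `n`, so that finitely many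
coefficients can be evaluated by `decide`. -/
def IsCoeffPrefix (n : ℕ) (l : List R) (f : R[X]) : Prop := ∀ i < n, l.getD i 0 = f.coeff i

def truncMul (n : ℕ) (l l' : List R) : List R :=
  (List.range n).map fun i ↦ ∑ j ∈ range (i + 1), l.getD j 0 * l'.getD (i - j) 0

def truncPow (n : ℕ) (l : List R) : ℕ → List R
  | 0 => [1]
  | k + 1 => truncMul n (truncPow n l k) l

def truncProd (n : ℕ) (l : ℕ → List R) : ℕ → List R
  | 0 => [1]
  | K + 1 => truncMul n (truncProd n l K) (l (K + 1))

def oneSubXPowList (n m : ℕ) : List R :=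
  (List.range n).map fun i ↦ (if i = 0 then 1 else 0) - if i = m then 1 else 0

theorem isCoeffPrefix_one (n : ℕ) : IsCoeffPrefix n [(1 : R)] 1 := by
  rintro (_ | i) _ <;> simp [coeff_one]

theorem isCoeffPrefix_oneSubXPowList (n m : ℕ) :
    IsCoeffPrefix n (oneSubXPowList n m) (1 - X ^ m : R[X]) := by
  intro i hi
  simp [oneSubXPowList, List.getD_eq_getElem?_getD, hi, coeff_one, coeff_X_pow, eq_comm]

theorem IsCoeffPrefix.truncMul {n : ℕ} {l l' : List R} {f g : R[X]} (hl : IsCoeffPrefix n l f)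
    (hl' : IsCoeffPrefix n l' g) : IsCoeffPrefix n (truncMul n l l') (f * g) := by
  intro i hi
  simp only [_root_.truncMul, List.getD_eq_getElem?_getD, List.getElem?_map,
    List.getElem?_range hi, Option.map_some, Option.getD_some]
  rw [coeff_mul, Nat.sum_antidiagonal_eq_sum_range_succ_mk]
  exact sum_congr rfl fun j hj ↦ by
    rw [← List.getD_eq_getElem?_getD, ← List.getD_eq_getElem?_getD,
      hl j (by rw [mem_range] at hj; omega), hl' (i - j) (by omega)]

theorem IsCoeffPrefix.truncPow {n : ℕ} {l : List R} {f : R[X]} (hl : IsCoeffPrefix n l f)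
    (k : ℕ) : IsCoeffPrefix n (truncPow n l k) (f ^ k) := by
  induction k with
  | zero => exact isCoeffPrefix_one n
  | succ k ih => rw [pow_succ]; exact ih.truncMul hl

theorem IsCoeffPrefix.truncProd {n : ℕ} {l : ℕ → List R} {f : ℕ → R[X]}
    (hl : ∀ m, IsCoeffPrefix n (l m) (f m)) (K : ℕ) :
    IsCoeffPrefix n (truncProd n l K) (∏ m ∈ Icc 1 K, f m) := by
  induction K with
  | zero => simpa [_root_.truncProd] using isCoeffPrefix_one n
  | succ K ih => rw [prod_Icc_succ_top (by omega)]; exact ih.truncMul (hl (K + 1))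

end CoeffLists

theorem coeff_qPochhammer_pow_six_of_le {K b : ℕ} (hb : b < 7) (hK : 6 ≤ K) :
    (qPochhammer (ZMod 7) K ^ 6).coeff b = [1, 1, 2, 3, 5, 0, 4].getD b 0 := by
  have hlist :
      truncPow 7 (truncProd 7 (oneSubXPowList 7) 6) 6 = [(1 : ZMod 7), 1, 2, 3, 5, 0, 4] := by
    decide
  rw [← hlist, (IsCoeffPrefix.truncProd (isCoeffPrefix_oneSubXPowList 7) 6).truncPow 6 b hb]
  exact smodEq_X_pow_iff.mp ((qPochhammer_smodEq hK).pow 6) b hb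

theorem coeff_qPochhammer_pow_six_eq_zero_iff {K b : ℕ} (hb : b < 7) (hK : 6 ≤ K) :
    (qPochhammer (ZMod 7) K ^ 6).coeff b = 0 ↔ b = 5 := by
  rw [coeff_qPochhammer_pow_six_of_le hb hK]
  interval_cases b <;> decide

theorem coeff_one_qPochhammer_pow_six {K : ℕ} (hK : 6 ≤ K) :
    (qPochhammer (ZMod 7) K ^ 6).coeff 1 = 1 :=
  coeff_qPochhammer_pow_six_of_le (by norm_num) hK

section Expand

variable {R : Type*} [CommRing R]

theorem Polynomial.expand_eq_C_add_C_mul_X_pow_add (N : ℕ) (g : R[X]) :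
    expand R N g =
      C (g.coeff 0) + C (g.coeff 1) * X ^ N + X ^ (2 * N) * expand R N (divX (divX g)) := by
  conv_lhs => rw [← X_mul_divX_add g, ← X_mul_divX_add (divX g)]
  simp only [coeff_divX, map_add, map_mul, expand_X, expand_C, zero_add]
  ring

theorem Polynomial.coeff_mul_expand_of_lt {N k : ℕ} (hk : k < N) (f g : R[X]) :
    (f * expand R N g).coeff k = f.coeff k * g.coeff 0 := by
  rw [expand_eq_C_add_C_mul_X_pow_add, mul_add, mul_add, coeff_add, coeff_add, coeff_mul_C,
    ← mul_assoc, coeff_mul_X_pow', if_neg (by omega), mul_left_comm, coeff_X_pow_mul',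
    if_neg (by omega), add_zero, add_zero]

theorem Polynomial.coeff_mul_expand_add_of_lt {N b : ℕ} (hb : b < N) (f g : R[X]) :
    (f * expand R N g).coeff (N + b) = f.coeff (N + b) * g.coeff 0 + f.coeff b * g.coeff 1 := by
  rw [expand_eq_C_add_C_mul_X_pow_add, mul_add, mul_add, coeff_add, coeff_add, coeff_mul_C,
    ← mul_assoc, coeff_mul_X_pow', if_pos (by omega), coeff_mul_C, mul_left_comm, coeff_X_pow_mul',
    if_neg (by omega), add_zero, Nat.add_sub_cancel_left]

theorem PowerSeries.coeff_mul_coe_expand_eq_zero {p k : ℕ} (hp : 0 < p) {γ : PowerSeries R}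
    (hγ : ∀ i, i % p = k % p → PowerSeries.coeff i γ = 0) (P : R[X]) :
    PowerSeries.coeff k (γ * (Polynomial.expand R p P : PowerSeries R)) = 0 := by
  rw [PowerSeries.coeff_mul]
  refine sum_eq_zero fun ij hij ↦ ?_
  rw [HasAntidiagonal.mem_antidiagonal] at hij
  rw [Polynomial.coeff_coe, Polynomial.coeff_expand hp]
  split_ifs with hdvd
  · rw [hγ ij.1 (by obtain ⟨t, ht⟩ := hdvd; rw [← hij, ht, Nat.add_mul_mod_self_left]), zero_mul]
  · rw [mul_zero]

end Expand

theorem PowerSeries.mul_prod_Icc_smodEq_one {R : Type*} [CommRing R] {φ : PowerSeries R}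
    {f : ℕ → PowerSeries R} (hf : ∀ m, f m ≡ 1 [SMOD Ideal.span {X ^ m}])
    (h : ∀ n, coeff n (φ * ∏ m ∈ Icc 1 n, f m) = if n = 0 then 1 else 0) (K : ℕ) :
    φ * ∏ m ∈ Icc 1 K, f m ≡ 1 [SMOD Ideal.span {X ^ (K + 1)}] := by
  rw [PowerSeries.smodEq_X_pow_iff]
  intro i hi
  have h1 := prod_Icc_smodEq_prod_Icc hf (by omega : i ≤ K)
  have h2 := PowerSeries.smodEq_X_pow_iff.mp ((SModEq.refl φ).mul h1) i (by omega)
  rw [h2, h i, PowerSeries.coeff_one]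

theorem coeff_pow_pred_eq_zero_of_mul_smodEq_one {p : ℕ} [Fact p.Prime]
    {γ : PowerSeries (ZMod p)} {P : (ZMod p)[X]} {K : ℕ}
    (h : γ * P ≡ 1 [SMOD Ideal.span {PowerSeries.X ^ (K + 1)}]) {a : ℕ}
    (hγ : ∀ i, i % p = a → PowerSeries.coeff i γ = 0) {k : ℕ} (hk : k ≤ K) (hka : k % p = a) :
    (P ^ (p - 1)).coeff k = 0 := by
  have hfrob : (P ^ (p - 1) : PowerSeries (ZMod p)) ≡
      γ * (expand (ZMod p) p P : PowerSeries (ZMod p))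
        [SMOD Ideal.span {PowerSeries.X ^ (K + 1)}] := by
    rw [ZMod.expand_card, Polynomial.coe_pow]
    calc (P : PowerSeries (ZMod p)) ^ (p - 1) = 1 * (P : PowerSeries (ZMod p)) ^ (p - 1) :=
          (one_mul _).symm
      _ ≡ γ * P * (P : PowerSeries (ZMod p)) ^ (p - 1)
          [SMOD Ideal.span {PowerSeries.X ^ (K + 1)}] :=
          h.symm.mul (SModEq.refl _)
      _ = γ * (P : PowerSeries (ZMod p)) ^ p := by
          rw [mul_assoc, ← pow_succ', Nat.sub_add_cancel (Fact.out : p.Prime).one_le]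
  rw [← Polynomial.coeff_coe, Polynomial.coe_pow,
    PowerSeries.smodEq_X_pow_iff.mp hfrob k (by omega)]
  exact PowerSeries.coeff_mul_coe_expand_eq_zero (Fact.out : p.Prime).pos
    (fun i hi ↦ hγ i (hi.trans hka)) P

noncomputable def cNDenominator (R : Type*) [CommRing R] (N K : ℕ) : R[X] :=
  ∏ m ∈ Icc 1 K, (1 - X ^ m) * (1 - X ^ (N * m))

section CNDenominator

variable {R : Type*} [CommRing R]

theorem cNDenominator_eq (N K : ℕ) :
    cNDenominator R N K = qPochhammer R K * expand R N (qPochhammer R K) := by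
  simp [cNDenominator, qPochhammer, prod_mul_distrib, map_prod, pow_mul]

theorem coe_cNDenominator (N K : ℕ) : (cNDenominator R N K : PowerSeries R) =
    ∏ m ∈ Icc 1 K, (1 - PowerSeries.X ^ m) * (1 - PowerSeries.X ^ (N * m)) := by
  rw [cNDenominator, ← coeToPowerSeries.ringHom_apply, map_prod]
  simp [coeToPowerSeries.ringHom_apply]

theorem coeff_cNDenominator_pow_six_of_lt {N k : ℕ} (hk : k < N) (K : ℕ) :
    (cNDenominator R N K ^ 6).coeff k = (qPochhammer R K ^ 6).coeff k := by
  rw [cNDenominator_eq, mul_pow, ← map_pow, coeff_mul_expand_of_lt hk,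
    coeff_zero_qPochhammer_pow, mul_one]

theorem coeff_cNDenominator_pow_six_add_of_lt {N b : ℕ} (hb : b < N) (K : ℕ) :
    (cNDenominator R N K ^ 6).coeff (N + b) = (qPochhammer R K ^ 6).coeff (N + b) +
      (qPochhammer R K ^ 6).coeff b * (qPochhammer R K ^ 6).coeff 1 := by
  rw [cNDenominator_eq, mul_pow, ← map_pow, coeff_mul_expand_add_of_lt hb,
    coeff_zero_qPochhammer_pow, mul_one]

end CNDenominator

theorem coeff_cNDenominator_pow_six_eq_zero {N a : ℕ} {c : ℕ → ℤ} (hN : 1 ≤ N)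
    (hc : ∀ n : ℕ, PowerSeries.coeff (R := ℤ) n ((PowerSeries.mk c) *
        ∏ m ∈ Finset.Icc 1 n, ((1 - PowerSeries.X ^ m) * (1 - PowerSeries.X ^ (N * m)))) =
      if n = 0 then 1 else 0)
    (hcong : ∀ n : ℕ, (7 : ℤ) ∣ c (7 * n + a)) {K k : ℕ} (hk : k ≤ K) (hka : k % 7 = a) :
    (cNDenominator (ZMod 7) N K ^ 6).coeff k = 0 := by
  have hfac (m : ℕ) : ((1 - PowerSeries.X ^ m) * (1 - PowerSeries.X ^ (N * m)) : PowerSeries ℤ) ≡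
      1 [SMOD Ideal.span {PowerSeries.X ^ m}] := by
    simpa using (one_sub_pow_smodEq_one (x := (PowerSeries.X : PowerSeries ℤ)) le_rfl).mul
      (one_sub_pow_smodEq_one (Nat.le_mul_of_pos_left m hN))
  have hZ := PowerSeries.mul_prod_Icc_smodEq_one hfac hc K
  have h7 : PowerSeries.mk (fun n ↦ (c n : ZMod 7)) * (cNDenominator (ZMod 7) N K : PowerSeries _)
      ≡ 1 [SMOD Ideal.span {PowerSeries.X ^ (K + 1)}] := by
    rw [smodEq_span_singleton_iff] at hZ ⊢
    convert map_dvd (PowerSeries.map (Int.castRingHom (ZMod 7))) hZ using 1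
    · simp
    · rw [map_sub, map_mul, map_prod, map_one, coe_cNDenominator]
      congr 2
      ext n
      simp
  have : Fact (Nat.Prime 7) := ⟨by norm_num⟩
  refine coeff_pow_pred_eq_zero_of_mul_smodEq_one h7 (fun i hi ↦ ?_) hk hka
  rw [PowerSeries.coeff_mk, ZMod.intCast_zmod_eq_zero_iff_dvd, ← Nat.div_add_mod i 7, hi]
  exact hcong _

set_option maxRecDepth 20000 in
theorem exists_coeff_cNDenominator_pow_six_ne_zero {N a : ℕ} (hN : N ∈ Icc 2 6) (ha : a < 7) :
    ∃ k ∈ ({a, 12} : Finset ℕ), k % 7 = a ∧ (cNDenominator (ZMod 7) N 12 ^ 6).coeff k ≠ 0 := by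
  have hlist : ∀ N ∈ Icc 2 6, ∀ a < 7, ∃ k ∈ ({a, 12} : Finset ℕ), k % 7 = a ∧
      (truncPow 13 (truncProd 13 (fun m ↦ truncMul 13 (oneSubXPowList 13 m)
        (oneSubXPowList 13 (N * m))) 12) 6).getD k 0 ≠ (0 : ZMod 7) := by
    decide
  obtain ⟨k, hk, hka, hne⟩ := hlist N hN a ha
  refine ⟨k, hk, hka, ?_⟩
  have hprefix := (IsCoeffPrefix.truncProd (fun m ↦
    (isCoeffPrefix_oneSubXPowList (R := ZMod 7) 13 m).truncMul
      (isCoeffPrefix_oneSubXPowList 13 (N * m))) 12).truncPow 6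
  rwa [cNDenominator, ← hprefix k (by simp only [mem_insert, mem_singleton] at hk; omega)]

/-- For `N > 1`, `0 ≤ a ≤ 6` and `c_N(n)` defined by
`∑ c_N(n) qⁿ = ∏_{n≥1} 1/((1 - qⁿ)(1 - q^{N n}))` in `ℤ[[q]]`:
if `c_N(7n + a) ≡ 0 (mod 7)` for all `n ≥ 0`, then `N ≡ 0 (mod 7)` and `a = 5`. -/
theorem cN_congruence_mod_seven_necessary
    (N : ℕ) (hN : 1 < N) (c : ℕ → ℤ)
    (hc : ∀ n : ℕ, PowerSeries.coeff (R := ℤ) n ((PowerSeries.mk c) *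
        ∏ m ∈ Finset.Icc 1 n, ((1 - PowerSeries.X ^ m) * (1 - PowerSeries.X ^ (N * m)))) =
      if n = 0 then 1 else 0)
    (a : ℕ) (ha : a ≤ 6)
    (hcong : ∀ n : ℕ, (7 : ℤ) ∣ c (7 * n + a)) :
    N % 7 = 0 ∧ a = 5 := by
  have hvanish {K k : ℕ} (hk : k ≤ K) (hka : k % 7 = a) :=
    coeff_cNDenominator_pow_six_eq_zero hN.le hc hcong hk hka
  rcases lt_or_ge N 7 with hN7 | hN7
  · obtain ⟨k, hk, hka, hne⟩ :=
      exists_coeff_cNDenominator_pow_six_ne_zero (mem_Icc.mpr ⟨hN, by omega⟩) (by omega : a < 7)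
    exact absurd (hvanish (by simp only [mem_insert, mem_singleton] at hk; omega) hka) hne
  · have ha5 : a = 5 := by
      have h := hvanish (K := N + 6) (k := a) (by omega) (Nat.mod_eq_of_lt (by omega))
      rwa [coeff_cNDenominator_pow_six_of_lt (by omega),
        coeff_qPochhammer_pow_six_eq_zero_iff (by omega) (by omega)] at h
    subst ha5
    -- `N + b ≡ 5 (mod 7)`, and `b = 5` exactly when `7 ∣ N`
    set b := (12 - N % 7) % 7
    have h := hvanish (K := N + 6) (k := N + b) (by omega) (by omega)
    rw [coeff_cNDenominator_pow_six_add_of_lt (by omega),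
      coeff_qPochhammer_pow_six_eq_zero (by omega) (by omega), coeff_one_qPochhammer_pow_six
      (by omega), zero_add, mul_one, coeff_qPochhammer_pow_six_eq_zero_iff (by omega)
      (by omega)] at h
    omega
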